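/- arXiv:1003.3024 — 5 statements merged into one kernel-verified Lean document; each statement's English description precedes it below -/
import Mathlib

section
/- A random walk on ℤ with i.i.d. integrable increments of mean ≥ 0, whose increments are not almost surely 0, attains arbitrarily high values with probability 1: almost surely, sup_n S_n = +∞ where S_n is the partial sum. -/
/-!
By Kolmogorov's 0-1 law the walk is bounded above with probability `0` or `1`; suppose it is a.s.
bounded. Then its supremum `M` and the supremum `M'` of the walk started after the first step are
a.s. finite with the same law, and `M = max 0 (ξ₀ + M')`. So `M - M'` lies between `ξ₀` and
`max 0 ξ₀`: it is integrable, with mean zero since `M` and `M'` have the same law. As `E ξ₀ ≥ 0`,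
this forces `M - M' = ξ₀` a.s. and `E ξ₀ = 0`. Thus `ξ₀ + M'` has the law of `M'`, with `ξ₀`
independent of `M' ≥ 0`; if `ξ₀ ≤ -t < 0` with positive probability, every a.s. lower bound `r` of
`M'` would improve to `r + t`, which is absurd. Hence `ξ₀ ≥ 0` has mean zero, so `ξ₀ = 0` a.s.
-/

open MeasureTheory ProbabilityTheory Filter

/-- The junk value `0` of the real `⨆` when the partial sums are unbounded above is harmless:
every use either assumes boundedness or only needs `0 ≤ supPartialSum x`. -/
noncomputable def supPartialSum (x : ℕ → ℝ) : ℝ := ⨆ n, ∑ i ∈ Finset.range n, x i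

lemma bddAbove_range_comp_add_iff (f : ℕ → ℝ) (k : ℕ) :
    BddAbove (Set.range fun n => f (n + k)) ↔ BddAbove (Set.range f) := by
  refine ⟨fun h => ?_, fun h => h.mono (Set.range_comp_subset_range _ f)⟩
  refine (((Set.finite_Iio k).image f).bddAbove.union h).mono ?_
  rintro _ ⟨n, rfl⟩
  rcases lt_or_ge n k with hn | hn
  · exact Or.inl ⟨n, hn, rfl⟩
  · exact Or.inr ⟨n - k, by simp only [Nat.sub_add_cancel hn]⟩

lemma bddAbove_range_partialSum_add_iff (x : ℕ → ℝ) (k : ℕ) :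
    BddAbove (Set.range fun n => ∑ i ∈ Finset.range n, x (i + k)) ↔
      BddAbove (Set.range fun n => ∑ i ∈ Finset.range n, x i) := by
  have hsum (n : ℕ) : ∑ i ∈ Finset.range n, x (i + k) =
      -∑ i ∈ Finset.range k, x i + ∑ i ∈ Finset.range (n + k), x i := by
    simp only [add_comm _ k, Finset.sum_range_add]; ring
  simp_rw [hsum, ← bddAbove_range_comp_add_iff (fun n => ∑ i ∈ Finset.range n, x i) k]
  rw [← Function.comp_def (-∑ i ∈ Finset.range k, x i + ·), Set.range_comp]
  exact (OrderIso.addLeft _).bddAbove_image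

lemma supPartialSum_nonneg (x : ℕ → ℝ) : 0 ≤ supPartialSum x := by
  by_cases hx : BddAbove (Set.range fun n => ∑ i ∈ Finset.range n, x i)
  · simpa [supPartialSum] using le_ciSup hx 0
  · rw [supPartialSum, Real.iSup_of_not_bddAbove hx]

lemma supPartialSum_eq_max {x : ℕ → ℝ}
    (hx : BddAbove (Set.range fun n => ∑ i ∈ Finset.range n, x i)) :
    supPartialSum x = max 0 (x 0 + supPartialSum fun i => x (i + 1)) := by
  have hx' : BddAbove (Set.range fun n => ∑ i ∈ Finset.range n, x (i + 1)) :=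
    (bddAbove_range_partialSum_add_iff x 1).2 hx
  have hsucc (n : ℕ) : ∑ i ∈ Finset.range (n + 1), x i = x 0 + ∑ i ∈ Finset.range n, x (i + 1) := by
    rw [Finset.sum_range_succ', add_comm]
  unfold supPartialSum
  apply le_antisymm
  · refine ciSup_le fun n => ?_
    cases n with
    | zero => simp
    | succ n =>
      rw [hsucc]
      exact le_max_of_le_right (add_le_add_right (le_ciSup hx' n) _)
  · refine max_le (by simpa using le_ciSup hx 0) ?_
    rw [← le_sub_iff_add_le']
    exact ciSup_le fun n => le_sub_iff_add_le'.2 (hsucc n ▸ le_ciSup hx (n + 1))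

lemma measurable_supPartialSum : Measurable supPartialSum :=
  .iSup fun _ => Finset.measurable_sum _ fun i _ => measurable_pi_apply i

lemma measurableSet_bddAbove_range_partialSum :
    MeasurableSet {x : ℕ → ℝ | BddAbove (Set.range fun n => ∑ i ∈ Finset.range n, x i)} := by
  have : {x : ℕ → ℝ | BddAbove (Set.range fun n => ∑ i ∈ Finset.range n, x i)} =
      ⋃ c : ℕ, ⋂ n, {x | ∑ i ∈ Finset.range n, x i ≤ (c : ℝ)} := by
    ext x
    simp only [Set.mem_ofPred_eq, Set.mem_iUnion, Set.mem_iInter, bddAbove_def,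
      Set.forall_mem_range]
    refine ⟨fun ⟨b, hb⟩ => ?_, fun ⟨c, hc⟩ => ⟨c, hc⟩⟩
    obtain ⟨c, hc⟩ := exists_nat_ge b
    exact ⟨c, fun n => (hb n).trans hc⟩
  rw [this]
  exact .iUnion fun c => .iInter fun n =>
    measurableSet_le (Finset.measurable_sum _ fun i _ => measurable_pi_apply i) measurable_const

lemma EReal.iSup_coe_eq_top_of_not_bddAbove {ι : Type*} {f : ι → ℝ}
    (h : ¬BddAbove (Set.range f)) : ⨆ i, (f i : EReal) = ⊤ := by
  rw [iSup_eq_top]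
  intro b hb
  induction b using EReal.rec with
  | bot =>
    obtain ⟨_, ⟨i, rfl⟩, -⟩ := not_bddAbove_iff.1 h 0
    exact ⟨i, EReal.bot_lt_coe _⟩
  | top => exact absurd hb (lt_irrefl _)
  | coe b =>
    obtain ⟨_, ⟨i, rfl⟩, hi⟩ := not_bddAbove_iff.1 h b
    exact ⟨i, EReal.coe_lt_coe_iff.2 hi⟩

namespace ProbabilityTheory

variable {Ω : Type*} {mΩ : MeasurableSpace Ω} {P : Measure Ω}

lemma IdentDistrib.integral_sub_eq_zero [IsFiniteMeasure P] {F G : Ω → ℝ}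
    (h : IdentDistrib F G P P) (hFG : Integrable (fun ω => F ω - G ω) P) :
    ∫ ω, (F ω - G ω) ∂P = 0 := by
  -- `c K` truncates to `[-K, K]`; being `1`-Lipschitz, it keeps `|F - G|` as a dominating function
  let c (K : ℕ) (y : ℝ) : ℝ := max (min y K) (-K)
  have hc_meas (K : ℕ) : Measurable (c K) := by fun_prop
  have hc_lip (K : ℕ) (a b : ℝ) : |c K a - c K b| ≤ |a - b| :=
    (abs_max_sub_max_le_abs _ _ _).trans (by simpa using abs_min_sub_min_le_max a K b K)
  have hc_int (K : ℕ) {H : Ω → ℝ} (hH : AEMeasurable H P) : Integrable (fun ω => c K (H ω)) P :=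
    .of_bound ((hc_meas K).comp_aemeasurable hH).aestronglyMeasurable K <| ae_of_all _ fun ω =>
      abs_le.2 ⟨le_max_right _ _, max_le (min_le_right _ _) (by simp)⟩
  have hc_lim (y : ℝ) : Tendsto (fun K : ℕ => c K y) atTop (nhds y) := by
    refine tendsto_const_nhds.congr' ?_
    filter_upwards [eventually_ge_atTop ⌈|y|⌉₊] with K hK
    have hy : |y| ≤ K := (Nat.le_ceil _).trans (Nat.cast_le.2 hK)
    simp only [c, min_eq_left (abs_le.1 hy).2, max_eq_left (abs_le.1 hy).1]
  have hK (K : ℕ) : ∫ ω, (c K (F ω) - c K (G ω)) ∂P = 0 := by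
    rw [integral_sub (hc_int K h.aemeasurable_fst) (hc_int K h.aemeasurable_snd), sub_eq_zero]
    exact (h.comp (hc_meas K)).integral_eq
  have hlim : Tendsto (fun K : ℕ => ∫ ω, (c K (F ω) - c K (G ω)) ∂P) atTop
      (nhds (∫ ω, (F ω - G ω) ∂P)) :=
    tendsto_integral_of_dominated_convergence (fun ω => |F ω - G ω|)
      (fun K => ((hc_int K h.aemeasurable_fst).sub (hc_int K h.aemeasurable_snd)).1) hFG.abs
      (fun K => ae_of_all _ fun ω => hc_lip K _ _)
      (ae_of_all _ fun ω => (hc_lim _).sub (hc_lim _))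
  simp only [hK] at hlim
  exact tendsto_nhds_unique hlim tendsto_const_nhds

lemma exists_pos_measure_le_neg_of_not_ae_nonneg {X : Ω → ℝ} (h : ¬∀ᵐ ω ∂P, 0 ≤ X ω) :
    ∃ t > 0, P {ω | X ω ≤ -t} ≠ 0 := by
  contrapose! h
  have hX : ∀ᵐ ω ∂P, ∀ n : ℕ, -(1 / ((n : ℝ) + 1)) < X ω := ae_all_iff.2 fun n => by
    simpa only [ae_iff, not_lt] using h _ Nat.one_div_pos_of_nat
  filter_upwards [hX] with ω hω
  by_contra! hneg
  obtain ⟨n, hn⟩ := exists_nat_one_div_lt (neg_pos.2 hneg)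
  linarith [hω n]

lemma ae_nonneg_of_indepFun_of_identDistrib_add {X Y : Ω → ℝ} {s : ℝ} (hXY : IndepFun X Y P)
    (hid : IdentDistrib (X + Y) Y P P) (hs : ∀ᵐ ω ∂P, s ≤ Y ω) :
    ∀ᵐ ω ∂P, 0 ≤ X ω := by
  by_contra hX0
  obtain ⟨t, ht, hXt⟩ := exists_pos_measure_le_neg_of_not_ae_nonneg hX0
  -- `{X ≤ -t}` has positive measure and is independent of `Y`, so `X + Y ≥ r` a.e. forces `Y ≥ r + t`
  have step (r : ℝ) (hr : ∀ᵐ ω ∂P, r ≤ Y ω) : ∀ᵐ ω ∂P, r + t ≤ Y ω := by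
    have hnull : P ((X + Y) ⁻¹' Set.Iio r) = 0 := by
      rw [hid.measure_mem_eq measurableSet_Iio, ← ae_iff.1 hr]
      simp only [not_le]
      rfl
    have hprod := hXY.measure_inter_preimage_eq_mul _ _ (measurableSet_Iic (a := -t))
      (measurableSet_Iio (a := r + t))
    have hsub : X ⁻¹' Set.Iic (-t) ∩ Y ⁻¹' Set.Iio (r + t) ⊆ (X + Y) ⁻¹' Set.Iio r := by
      rintro ω ⟨h1, h2⟩
      simp only [Set.mem_preimage, Set.mem_Iic, Set.mem_Iio, Pi.add_apply] at *
      linarith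
    rw [measure_mono_null hsub hnull] at hprod
    simp only [ae_iff, not_le]
    exact (mul_eq_zero.1 hprod.symm).resolve_left hXt
  have hall : ∀ᵐ ω ∂P, ∀ k : ℕ, s + k * t ≤ Y ω := ae_all_iff.2 fun k => by
    induction k with
    | zero => simpa using hs
    | succ k ih => simpa [add_mul, add_assoc] using step _ ih
  have : (ae P).NeBot := ae_neBot.2 fun h0 => hXt (by simp [h0])
  obtain ⟨ω, hω⟩ := hall.exists
  obtain ⟨k, hk⟩ := exists_nat_gt ((Y ω - s) / t)
  rw [div_lt_iff₀ ht] at hk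
  linarith [hω k]

variable {ξ : ℕ → Ω → ℝ}

lemma measurable_shift_iSup_comap (ξ : ℕ → Ω → ℝ) (k : ℕ) :
    Measurable[⨆ j ≥ k, MeasurableSpace.comap (ξ j) inferInstance] fun ω i => ξ (i + k) ω :=
  (@measurable_pi_iff Ω ℕ _ (⨆ j ≥ k, _) _ _).2 fun i => (comap_measurable (ξ (i + k))).mono
    (le_iSup₂_of_le (i + k) (Nat.le_add_left k i) le_rfl) le_rfl

lemma iIndepFun.indepFun_zero_shift (hmeas : ∀ i, Measurable (ξ i)) (hindep : iIndepFun ξ P) :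
    IndepFun (ξ 0) (fun ω i => ξ (i + 1) ω) P := by
  have h := indep_iSup_of_disjoint (fun i => (hmeas i).comap_le) hindep.iIndep
    (S := {0}) (T := Set.Ici 1) (by simp)
  rw [IndepFun_iff_Indep]
  exact indep_of_indep_of_le_right (indep_of_indep_of_le_left h (le_iSup₂_of_le 0 rfl le_rfl))
    (measurable_shift_iSup_comap ξ 1).comap_le

lemma iIndepFun.identDistrib_shift (hmeas : ∀ i, Measurable (ξ i)) (hindep : iIndepFun ξ P)
    (hident : ∀ i, IdentDistrib (ξ i) (ξ 0) P P) (k : ℕ) :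
    IdentDistrib (fun ω i => ξ (i + k) ω) (fun ω i => ξ i ω) P P where
  aemeasurable_fst := (measurable_pi_lambda _ fun i => hmeas _).aemeasurable
  aemeasurable_snd := (measurable_pi_lambda _ hmeas).aemeasurable
  map_eq := by
    rw [(hindep.precomp (add_left_injective k)).map_fun_eq_infinitePi_map fun i => hmeas _,
      hindep.map_fun_eq_infinitePi_map hmeas]
    simp only [(hident _).map_eq]

lemma iIndepFun.measure_bddAbove_range_partialSum_eq_zero_or_one
    (hmeas : ∀ i, Measurable (ξ i)) (hindep : iIndepFun ξ P) :
    P {ω | BddAbove (Set.range fun n => ∑ i ∈ Finset.range n, ξ i ω)} = 0 ∨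
      P {ω | BddAbove (Set.range fun n => ∑ i ∈ Finset.range n, ξ i ω)} = 1 := by
  refine measure_zero_or_one_of_measurableSet_limsup_atTop (fun i => (hmeas i).comap_le)
    hindep.iIndep ?_
  rw [limsup_eq_iInf_iSup_of_nat, MeasurableSpace.measurableSet_iInf]
  intro k
  have htail : {ω | BddAbove (Set.range fun n => ∑ i ∈ Finset.range n, ξ i ω)} =
      (fun ω i => ξ (i + k) ω) ⁻¹'
        {x | BddAbove (Set.range fun n => ∑ i ∈ Finset.range n, x i)} := by
    ext ω
    exact (bddAbove_range_partialSum_add_iff (fun i => ξ i ω) k).symm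
  rw [htail]
  exact measurable_shift_iSup_comap ξ k measurableSet_bddAbove_range_partialSum

lemma iIndepFun.not_ae_bddAbove_range_partialSum (hmeas : ∀ i, Measurable (ξ i))
    (hindep : iIndepFun ξ P) (hident : ∀ i, IdentDistrib (ξ i) (ξ 0) P P)
    (hint : Integrable (ξ 0) P) (hmean : 0 ≤ ∫ ω, ξ 0 ω ∂P) (hnz : ¬∀ᵐ ω ∂P, ξ 0 ω = 0) :
    ¬∀ᵐ ω ∂P, BddAbove (Set.range fun n => ∑ i ∈ Finset.range n, ξ i ω) := by
  intro hbdd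
  have := hindep.isProbabilityMeasure
  set M : Ω → ℝ := fun ω => supPartialSum fun i => ξ i ω
  set M' : Ω → ℝ := fun ω => supPartialSum fun i => ξ (i + 1) ω
  have hM' : IdentDistrib M' M P P :=
    (hindep.identDistrib_shift hmeas hident 1).comp measurable_supPartialSum
  have hrec : ∀ᵐ ω ∂P, M ω = max 0 (ξ 0 ω + M' ω) := hbdd.mono fun ω => supPartialSum_eq_max
  have hlow : ∀ᵐ ω ∂P, ξ 0 ω ≤ M ω - M' ω := hrec.mono fun ω h => by
    rw [h]
    linarith [le_max_right 0 (ξ 0 ω + M' ω)]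
  have habs : ∀ᵐ ω ∂P, |M ω - M' ω| ≤ |ξ 0 ω| := hrec.mono fun ω h => by
    have := supPartialSum_nonneg fun i => ξ (i + 1) ω
    rw [h, abs_le]
    constructor <;> cases max_cases 0 (ξ 0 ω + M' ω) <;> cases abs_cases (ξ 0 ω) <;> linarith
  have hD : Integrable (fun ω => M ω - M' ω) P :=
    hint.abs.mono' (hM'.aemeasurable_snd.sub hM'.aemeasurable_fst).aestronglyMeasurable habs
  have hD0 : ∫ ω, (M ω - M' ω) ∂P = 0 := hM'.symm.integral_sub_eq_zero hD
  have hmean0 : ∫ ω, ξ 0 ω ∂P = 0 := le_antisymm (hD0 ▸ integral_mono_ae hint hD hlow) hmean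
  have hξ : ξ 0 =ᵐ[P] fun ω => M ω - M' ω :=
    (integral_eq_iff_of_ae_le hint hD hlow).1 (hmean0.trans hD0.symm)
  have hξM' : IdentDistrib (ξ 0 + M') M' P P :=
    (IdentDistrib.of_ae_eq ((hmeas 0).aemeasurable.add hM'.aemeasurable_fst)
      (hξ.mono fun ω h => by simp [h])).trans hM'.symm
  have hpos : ∀ᵐ ω ∂P, 0 ≤ ξ 0 ω :=
    ae_nonneg_of_indepFun_of_identDistrib_add
      ((hindep.indepFun_zero_shift hmeas).comp measurable_id measurable_supPartialSum) hξM'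
      (ae_of_all _ fun ω => supPartialSum_nonneg _)
  exact hnz ((integral_eq_zero_iff_of_nonneg_ae hpos hint).1 hmean0)

end ProbabilityTheory

/-- A random walk with i.i.d. integrable increments of mean `≥ 0`, whose increments
are not almost surely `0`, attains arbitrarily high values with probability 1:
almost surely `sup_n S_n = +∞`. -/
theorem random_walk_sup_infinite {Ω : Type*} [MeasurableSpace Ω]
    (P : Measure Ω) [IsProbabilityMeasure P]
    (ξ : ℕ → Ω → ℝ) (hmeas : ∀ i, Measurable (ξ i))
    (hindep : iIndepFun ξ P)
    (hident : ∀ i, IdentDistrib (ξ i) (ξ 0) P P)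
    (hint : Integrable (ξ 0) P)
    (hmean : 0 ≤ ∫ ω, ξ 0 ω ∂P)
    (hnz : P {ω | ξ 0 ω = 0} < 1) :
    ∀ᵐ ω ∂P, (⨆ n : ℕ, ((∑ i ∈ Finset.range n, ξ i ω : ℝ) : EReal)) = ⊤ := by
  have hnz' : ¬∀ᵐ ω ∂P, ξ 0 ω = 0 := fun h => hnz.ne <| by
    rw [(ae_iff_measure_eq (measurableSet_eq_fun (hmeas 0) measurable_const).nullMeasurableSet).1 h,
      measure_univ]
  have hA : MeasurableSet {ω | BddAbove (Set.range fun n => ∑ i ∈ Finset.range n, ξ i ω)} :=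
    measurable_pi_lambda _ hmeas measurableSet_bddAbove_range_partialSum
  have hA0 : P {ω | BddAbove (Set.range fun n => ∑ i ∈ Finset.range n, ξ i ω)} = 0 :=
    (hindep.measure_bddAbove_range_partialSum_eq_zero_or_one hmeas).resolve_right fun h1 =>
      hindep.not_ae_bddAbove_range_partialSum hmeas hident hint hmean hnz'
        ((ae_iff_measure_eq hA.nullMeasurableSet).2 (by rw [h1, measure_univ]))
  filter_upwards [measure_eq_zero_iff_ae_notMem.1 hA0] with ω hω
  exact EReal.iSup_coe_eq_top_of_not_bddAbove hω
end

section
/- Truncation lemma for tandem queues: Let A, S₁, S₂ : ℤ → ℕ and for s ∈ ℤ let A|_{(−s,∞)} be A truncated to be 0 before time −s. Let D₂ = D(D(A,S₁),S₂) and D₂^{(s)} = D(D(A|_{(−s,∞)},S₁),S₂) be the departures from the two-queue tandem with original and truncated arrivals. Then for every n ∈ ℤ there exists s₀ such that for all s ≥ s₀, D₂^{(s)}(n) = D₂(n). -/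
/-!
The departure `D(B,S)(n) ≤ S(n)` is a finite number, and `X(B,S)(n)` is a supremum of partial
sums over windows `[m, n)`; so one window `[m, n]` of the arrivals already certifies the lower
bound `D(B,S)(n) ≤ D(B',S)(n)` for every `B'` agreeing with `B` there. Hence if arrival processes
`B_s ≤ B` eventually agree with `B` at each fixed time, they eventually agree on that window, and
monotonicity of `D` in the arrivals gives `D(B_s,S)(n) = D(B,S)(n)` eventually. Applied to the
truncations of `A` at the first queue this makes the arrivals of the second queue converge in the
same sense, and applying it once more proves the theorem.
-/

/-- Queue length at time `n` for arrivals `A` and services `S`. -/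
noncomputable def qX (A S : ℤ → ℕ) (n : ℤ) : ℕ∞ :=
  ⨆ (m : ℤ) (_ : m ≤ n), ((∑ r ∈ Finset.Ico m n, ((A r : ℤ) - (S r : ℤ))).toNat : ℕ∞)

/-- Departures at time `n`: `min(X(n) + A(n), S(n))`, with `min(∞, s) = s`. -/
noncomputable def qD (A S : ℤ → ℕ) (n : ℤ) : ℕ :=
  (min (qX A S n + (A n : ℕ∞)) ((S n : ℕ∞))).toNat

/-- `A` truncated to vanish before time `-s`. -/
def truncBefore (A : ℤ → ℕ) (s : ℤ) : ℤ → ℕ := fun n => if n < -s then 0 else A n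

open Filter

noncomputable def netInput (A S : ℤ → ℕ) (m n : ℤ) : ℤ :=
  ∑ r ∈ Finset.Ico m n, ((A r : ℤ) - (S r : ℤ))

lemma qX_eq_iSup_netInput (A S : ℤ → ℕ) (n : ℤ) :
    qX A S n = ⨆ (m : ℤ) (_ : m ≤ n), ((netInput A S m n).toNat : ℕ∞) :=
  rfl

lemma netInput_mono {A A' : ℤ → ℕ} (S : ℤ → ℕ) (h : ∀ r, A r ≤ A' r) (m n : ℤ) :
    netInput A S m n ≤ netInput A' S m n :=
  Finset.sum_le_sum fun r _ => by have := h r; omega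

lemma netInput_congr {A A' : ℤ → ℕ} (S : ℤ → ℕ) {m n : ℤ}
    (h : ∀ r ∈ Finset.Ico m n, A' r = A r) : netInput A' S m n = netInput A S m n :=
  Finset.sum_congr rfl fun r hr => by rw [h r hr]

lemma netInput_toNat_le_qX (A S : ℤ → ℕ) {m n : ℤ} (hm : m ≤ n) :
    ((netInput A S m n).toNat : ℕ∞) ≤ qX A S n :=
  le_iSup₂_of_le m hm le_rfl

lemma qX_mono {A A' : ℤ → ℕ} (S : ℤ → ℕ) (h : ∀ r, A r ≤ A' r) (n : ℤ) :
    qX A S n ≤ qX A' S n := by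
  rw [qX_eq_iSup_netInput A]
  exact iSup₂_le fun m hm => le_trans (Nat.cast_le.2 (Int.toNat_le_toNat (netInput_mono S h m n)))
    (netInput_toNat_le_qX A' S hm)

lemma exists_le_netInput_of_le_qX {A S : ℤ → ℕ} {n : ℤ} {c : ℕ} (h : (c : ℕ∞) ≤ qX A S n) :
    ∃ m ≤ n, c ≤ (netInput A S m n).toNat := by
  rcases Nat.eq_zero_or_pos c with rfl | hc
  · exact ⟨n, le_rfl, Nat.zero_le _⟩
  have hlt : ((c - 1 : ℕ) : ℕ∞) < qX A S n :=
    lt_of_lt_of_le (by exact_mod_cast Nat.sub_lt hc one_pos) h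
  simp only [qX_eq_iSup_netInput, lt_iSup_iff] at hlt
  obtain ⟨m, hmn, hm⟩ := hlt
  exact ⟨m, hmn, by have := Nat.cast_lt.mp hm; omega⟩

lemma le_qD_iff {A S : ℤ → ℕ} {n : ℤ} {d : ℕ} :
    d ≤ qD A S n ↔ (d : ℕ∞) ≤ qX A S n + A n ∧ d ≤ S n := by
  have hfin : min (qX A S n + (A n : ℕ∞)) (S n : ℕ∞) ≠ ⊤ :=
    ne_top_of_le_ne_top (ENat.natCast_ne_top _) (min_le_right _ _)
  rw [qD, ← Nat.cast_le (α := ℕ∞), ENat.natCast_toNat hfin, le_min_iff, Nat.cast_le]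

lemma qD_mono {A A' : ℤ → ℕ} (S : ℤ → ℕ) (h : ∀ r, A r ≤ A' r) (n : ℤ) :
    qD A S n ≤ qD A' S n := by
  obtain ⟨hX, hS⟩ := le_qD_iff.1 (le_refl (qD A S n))
  exact le_qD_iff.2 ⟨hX.trans (add_le_add (qX_mono S h n) (by exact_mod_cast h n)), hS⟩

lemma exists_le_qD_of_eqOn_Icc (A S : ℤ → ℕ) (n : ℤ) :
    ∃ m ≤ n, ∀ A' : ℤ → ℕ, (∀ r ∈ Finset.Icc m n, A' r = A r) → qD A S n ≤ qD A' S n := by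
  obtain ⟨hX, hS⟩ := le_qD_iff.1 (le_refl (qD A S n))
  have hc : ((qD A S n - A n : ℕ) : ℕ∞) ≤ qX A S n := by
    rw [ENat.natCast_sub, tsub_le_iff_right]
    exact hX
  obtain ⟨m, hmn, hm⟩ := exists_le_netInput_of_le_qX hc
  refine ⟨m, hmn, fun A' hA' => le_qD_iff.2 ⟨?_, hS⟩⟩
  have hn : A' n = A n := hA' n (Finset.mem_Icc.2 ⟨hmn, le_rfl⟩)
  have hwin : netInput A' S m n = netInput A S m n :=
    netInput_congr S fun r hr => hA' r (Finset.Ico_subset_Icc_self hr)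
  calc (qD A S n : ℕ∞) ≤ ((netInput A' S m n).toNat + A' n : ℕ) := by
        rw [hwin, hn, Nat.cast_le]; omega
    _ ≤ qX A' S n + A' n := by
        push_cast
        exact add_le_add (netInput_toNat_le_qX A' S hmn) le_rfl

lemma qD_eventually_eq {ι : Type*} {l : Filter ι} {A : ℤ → ℕ} {As : ι → ℤ → ℕ} (S : ℤ → ℕ)
    (hle : ∀ i r, As i r ≤ A r) (hev : ∀ r, ∀ᶠ i in l, As i r = A r) (n : ℤ) :
    ∀ᶠ i in l, qD (As i) S n = qD A S n := by
  obtain ⟨m, -, hm⟩ := exists_le_qD_of_eqOn_Icc A S n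
  filter_upwards [(Finset.Icc m n).eventually_all.2 fun r _ => hev r] with i hi
  exact le_antisymm (qD_mono S (hle i) n) (hm (As i) hi)

lemma truncBefore_le (A : ℤ → ℕ) (s r : ℤ) : truncBefore A s r ≤ A r := by
  unfold truncBefore
  split <;> omega

lemma eventually_truncBefore_eq (A : ℤ → ℕ) (r : ℤ) :
    ∀ᶠ s in atTop, truncBefore A s r = A r :=
  eventually_atTop.2 ⟨-r, fun s hs => if_neg (by omega)⟩

/-- Truncation lemma for tandem queues: the departures from the two-queue tandem
at any fixed time `n` agree with those for the truncated arrival process, for all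
sufficiently large truncation parameters `s`. -/
theorem tandem_truncation (A S₁ S₂ : ℤ → ℕ) (n : ℤ) :
    ∃ s₀ : ℤ, ∀ s : ℤ, s₀ ≤ s →
      qD (qD (truncBefore A s) S₁) S₂ n = qD (qD A S₁) S₂ n := by
  have hfirst : ∀ r, ∀ᶠ s in atTop, qD (truncBefore A s) S₁ r = qD A S₁ r :=
    qD_eventually_eq S₁ (truncBefore_le A) (eventually_truncBefore_eq A)
  exact eventually_atTop.1 <|
    qD_eventually_eq S₂ (fun s => qD_mono S₁ (truncBefore_le A s)) hfirst n
end

section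
/- Departure representation for a tandem of two queues started empty: Suppose A(n) = 0 for all n < 0. Let D₂ = D(D(A,S₁),S₂). Then for all t ≥ 1, ∑_{r=0}^{t−1} D₂(r) = min over 0 ≤ u₁ ≤ u₂ ≤ t of [ ∑_{r=0}^{u₁−1} A(r) + ∑_{r=u₁}^{u₂−1} S₁(r) + ∑_{r=u₂}^{t−1} S₂(r) ]. -/
namespace Queue

open Finset

section Intervals

variable {M : Type*} [AddCommMonoid M]

theorem sum_Ico_consecutive (f : ℤ → M) {a b c : ℤ} (hab : a ≤ b) (hbc : b ≤ c) :
    ∑ r ∈ Ico a b, f r + ∑ r ∈ Ico b c, f r = ∑ r ∈ Ico a c, f r := by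
  rw [← sum_union (Ico_disjoint_Ico_consecutive a b c), Ico_union_Ico_eq_Ico hab hbc]

theorem sum_Ico_add_one_top (f : ℤ → M) {a b : ℤ} (hab : a ≤ b) :
    ∑ r ∈ Ico a (b + 1), f r = ∑ r ∈ Ico a b, f r + f b := by
  rw [← insert_Ico_right_eq_Ico_add_one hab, sum_insert (by simp), add_comm]

end Intervals

theorem toNat_sum_sub (A S : ℤ → ℕ) (s : Finset ℤ) :
    (∑ r ∈ s, ((A r : ℤ) - (S r : ℤ))).toNat = ∑ r ∈ s, A r - ∑ r ∈ s, S r := by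
  rw [sum_sub_distrib, ← Nat.cast_sum, ← Nat.cast_sum, Int.toNat_sub]

/-- Truncated subtraction in `ℕ` is the positive part in the definition of `qX`; the supremum
runs over `0 ≤ m ≤ t` only, which is all that matters once `A` vanishes before `0`. -/
noncomputable def queueLength (A S : ℤ → ℕ) (t : ℤ) : ℕ :=
  (Icc 0 t).sup fun m => ∑ r ∈ Ico m t, A r - ∑ r ∈ Ico m t, S r

variable {A S : ℤ → ℕ}

theorem sub_le_queueLength {u t : ℤ} (hu : 0 ≤ u) (hut : u ≤ t) :
    ∑ r ∈ Ico u t, A r - ∑ r ∈ Ico u t, S r ≤ queueLength A S t :=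
  le_sup (f := fun m => ∑ r ∈ Ico m t, A r - ∑ r ∈ Ico m t, S r) (mem_Icc.mpr ⟨hu, hut⟩)

theorem exists_queueLength_eq {t : ℤ} (ht : 0 ≤ t) :
    ∃ u, 0 ≤ u ∧ u ≤ t ∧ queueLength A S t = ∑ r ∈ Ico u t, A r - ∑ r ∈ Ico u t, S r := by
  obtain ⟨u, hu, h⟩ := exists_mem_eq_sup (Icc 0 t) ⟨0, by simp [ht]⟩
    fun m => ∑ r ∈ Ico m t, A r - ∑ r ∈ Ico m t, S r
  exact ⟨u, (mem_Icc.mp hu).1, (mem_Icc.mp hu).2, h⟩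

theorem queueLength_of_neg {t : ℤ} (ht : t < 0) : queueLength A S t = 0 := by
  simp [queueLength, Icc_eq_empty_of_lt ht]

theorem queueLength_add_one {n : ℤ} (hn : 0 ≤ n) :
    queueLength A S (n + 1) = queueLength A S n + A n - S n := by
  apply le_antisymm
  · refine Finset.sup_le fun m hm => ?_
    obtain ⟨hm0, hmn⟩ := mem_Icc.mp hm
    rcases hmn.lt_or_eq with hmn | rfl
    · have hterm := sub_le_queueLength (A := A) (S := S) hm0 (Int.lt_add_one_iff.mp hmn)
      rw [sum_Ico_add_one_top A (by omega), sum_Ico_add_one_top S (by omega)]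
      omega
    · simp
  · obtain ⟨u, hu0, hun, hu⟩ := exists_queueLength_eq (A := A) (S := S) hn
    have hfrom_u := sub_le_queueLength (A := A) (S := S) hu0 (hun.trans (Int.le_add_one le_rfl))
    have hfrom_n := sub_le_queueLength (A := A) (S := S) hn (Int.le_add_one le_rfl)
    rw [sum_Ico_add_one_top A hun, sum_Ico_add_one_top S hun] at hfrom_u
    rw [sum_Ico_add_one_top A le_rfl, sum_Ico_add_one_top S le_rfl] at hfrom_n
    simp only [Ico_self, sum_empty, zero_add] at hfrom_n
    omega

variable (hA : ∀ n : ℤ, n < 0 → A n = 0)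
include hA

theorem qX_eq_queueLength (t : ℤ) : qX A S t = queueLength A S t := by
  apply le_antisymm
  · refine iSup₂_le fun m hmt => ?_
    rw [toNat_sum_sub, Nat.cast_le]
    rcases le_or_gt 0 m with hm | hm
    · exact sub_le_queueLength hm hmt
    have hA_neg : ∀ s, s ≤ 0 → ∑ r ∈ Ico m s, A r = 0 := fun s hs =>
      sum_eq_zero fun r hr => hA r (by have := mem_Ico.mp hr; omega)
    rcases lt_or_ge t 0 with ht | ht
    · simp [hA_neg t ht.le]
    -- Starting the sum at `m < 0` adds no arrivals, only services.
    have hmA := sum_Ico_consecutive A hm.le ht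
    have hmS := sum_Ico_consecutive S hm.le ht
    have h0 := sub_le_queueLength (A := A) (S := S) le_rfl ht
    rw [hA_neg 0 le_rfl] at hmA
    omega
  · rcases lt_or_ge t 0 with ht | ht
    · simp [queueLength_of_neg ht]
    obtain ⟨u, -, hut, hu⟩ := exists_queueLength_eq (A := A) (S := S) ht
    rw [hu, ← toNat_sum_sub]
    exact le_iSup₂ (f := fun m (_ : m ≤ t) =>
      ((∑ r ∈ Ico m t, ((A r : ℤ) - (S r : ℤ))).toNat : ℕ∞)) u hut

theorem qD_eq_min (n : ℤ) : qD A S n = min (queueLength A S n + A n) (S n) := by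
  rw [qD, qX_eq_queueLength hA, ← Nat.cast_add, ← Nat.mono_cast.map_min, ENat.toNat_natCast]

theorem qD_eq_zero_of_neg {n : ℤ} (hn : n < 0) : qD A S n = 0 := by
  simp [qD_eq_min hA, queueLength_of_neg hn, hA n hn]

theorem sum_qD_add_queueLength {t : ℤ} (ht : 0 ≤ t) :
    ∑ r ∈ Ico 0 t, qD A S r + queueLength A S t = ∑ r ∈ Ico 0 t, A r := by
  induction t, ht using Int.leInduction with
  | base => simp [queueLength]
  | succ n hn ih =>
    rw [sum_Ico_add_one_top _ hn, sum_Ico_add_one_top _ hn, queueLength_add_one hn,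
      qD_eq_min hA]
    omega

theorem isLeast_sum_qD {t : ℤ} (ht : 0 ≤ t) :
    IsLeast {x | ∃ u, 0 ≤ u ∧ u ≤ t ∧ x = ∑ r ∈ Ico 0 u, A r + ∑ r ∈ Ico u t, S r}
      (∑ r ∈ Ico 0 t, qD A S r) := by
  have hcons := sum_qD_add_queueLength (S := S) hA ht
  constructor
  · obtain ⟨u, hu0, hut, hu⟩ := exists_queueLength_eq (A := A) (S := S) ht
    have hsplit := sum_Ico_consecutive A hu0 hut
    -- An empty backlog means every arrival has departed, which is the case `u = t`.
    rcases le_total (∑ r ∈ Ico u t, S r) (∑ r ∈ Ico u t, A r) with hSA | hAS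
    · exact ⟨u, hu0, hut, by omega⟩
    · exact ⟨t, ht, le_rfl, by simp only [Ico_self, sum_empty]; omega⟩
  · rintro _ ⟨u, hu0, hut, rfl⟩
    have hsplit := sum_Ico_consecutive A hu0 hut
    have hu := sub_le_queueLength (A := A) (S := S) hu0 hut
    omega

end Queue

open Queue in
/-- Departure representation for a tandem of two queues started empty:
if `A(n) = 0` for `n < 0`, the cumulative departures from the second queue up to
time `t` are given by the variational (last-passage) formula. -/
theorem tandem_departure_representation (A S₁ S₂ : ℤ → ℕ)
    (hA : ∀ n : ℤ, n < 0 → A n = 0) (t : ℤ) (ht : 1 ≤ t) :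
    ∑ r ∈ Finset.Ico (0 : ℤ) t, qD (qD A S₁) S₂ r
      = sInf {x : ℕ | ∃ u₁ u₂ : ℤ, 0 ≤ u₁ ∧ u₁ ≤ u₂ ∧ u₂ ≤ t ∧
          x = ∑ r ∈ Finset.Ico (0 : ℤ) u₁, A r
              + ∑ r ∈ Finset.Ico u₁ u₂, S₁ r
              + ∑ r ∈ Finset.Ico u₂ t, S₂ r} := by
  have hD₁ : ∀ n : ℤ, n < 0 → qD A S₁ n = 0 := fun n => qD_eq_zero_of_neg hA
  obtain ⟨⟨u₂, hu₂, hu₂t, h₂⟩, hleast₂⟩ := isLeast_sum_qD (S := S₂) hD₁ (by omega : (0 : ℤ) ≤ t)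
  refine (IsLeast.csInf_eq ⟨?_, ?_⟩).symm
  · obtain ⟨⟨u₁, hu₁, hu₁₂, h₁⟩, -⟩ := isLeast_sum_qD (S := S₁) hA hu₂
    exact ⟨u₁, u₂, hu₁, hu₁₂, hu₂t, by rw [h₂, h₁]⟩
  · rintro _ ⟨v₁, v₂, hv₁, hv₁₂, hv₂t, rfl⟩
    have hv₂ := hv₁.trans hv₁₂
    calc _ ≤ ∑ r ∈ Finset.Ico 0 v₂, qD A S₁ r + ∑ r ∈ Finset.Ico v₂ t, S₂ r :=
          hleast₂ ⟨v₂, hv₂, hv₂t, rfl⟩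
      _ ≤ _ := by
          gcongr
          exact (isLeast_sum_qD (S := S₁) hA hv₂).2 ⟨v₁, hv₁, hv₁₂, rfl⟩
end

section
/- Single-queue departure formula with empty start: if A(n) = 0 for all n < 0, then for all t ≥ 1, ∑_{r=0}^{t−1} D(A,S)(r) = min over 0 ≤ u ≤ t of [ ∑_{r=0}^{u−1} A(r) + ∑_{r=u}^{t−1} S(r) ]. -/
/-!
Write `M t = min_{0 ≤ u ≤ t} (A[0,u) + S[u,t))` for the least cut cost. Splitting off the cut
`u = t + 1` gives `M (t + 1) = min (A[0,t+1)) (M t + S t)`. A cut cost and the net arrivals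
`A[u,t) - S[u,t)` add up to `A[0,t)`, and since nothing arrives before time `0` the supremum
defining `X t` may be taken over `0 ≤ u ≤ t`; hence `X t = A[0,t) - M t`. Then
`M t + D t = min (A[0,t) + A t) (M t + S t) = M (t + 1)`, so the cumulative departures satisfy the
recursion of `M`.
-/

namespace Finset

variable {α M : Type*} [LinearOrder α] [LocallyFiniteOrder α] [AddCommMonoid M]

theorem sum_Ico_add_sum_Ico {a b c : α} (f : α → M) (hab : a ≤ b) (hbc : b ≤ c) :
    ∑ r ∈ Ico a b, f r + ∑ r ∈ Ico b c, f r = ∑ r ∈ Ico a c, f r := by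
  rw [← sum_union (Ico_disjoint_Ico_consecutive a b c), Ico_union_Ico_eq_Ico hab hbc]

theorem sum_Ico_add_one_right [One α] [Add α] [SuccAddOrder α] [NoMaxOrder α] {a b : α}
    (f : α → M) (hab : a ≤ b) : ∑ r ∈ Ico a (b + 1), f r = ∑ r ∈ Ico a b, f r + f b := by
  rw [← insert_Ico_right_eq_Ico_add_one hab, sum_insert (by simp), add_comm]

end Finset

open Finset

namespace SingleQueue

variable (A S : ℤ → ℕ)

noncomputable def cutCost (t u : ℤ) : ℕ := ∑ r ∈ Ico 0 u, A r + ∑ r ∈ Ico u t, S r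

noncomputable def cutCosts (t : ℤ) : Set ℕ :=
  {x | ∃ u : ℤ, 0 ≤ u ∧ u ≤ t ∧ x = cutCost A S t u}

noncomputable def netArrivals (m n : ℤ) : ℤ := ∑ r ∈ Ico m n, ((A r : ℤ) - S r)

@[simp]
theorem cutCost_self (t : ℤ) : cutCost A S t t = ∑ r ∈ Ico 0 t, A r := by
  simp [cutCost]

theorem sum_arrivals_mem_cutCosts {t : ℤ} (ht : 0 ≤ t) : ∑ r ∈ Ico 0 t, A r ∈ cutCosts A S t :=
  ⟨t, ht, le_rfl, (cutCost_self A S t).symm⟩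

theorem isLeast_cutCosts_zero : IsLeast (cutCosts A S 0) 0 :=
  ⟨by simpa using sum_arrivals_mem_cutCosts A S le_rfl, fun _ _ => Nat.zero_le _⟩

theorem cutCost_add_one {t u : ℤ} (hu : u ≤ t) :
    cutCost A S (t + 1) u = cutCost A S t u + S t := by
  rw [cutCost, cutCost, sum_Ico_add_one_right _ hu, add_assoc]

theorem cutCosts_add_one {t : ℤ} (ht : 0 ≤ t) :
    cutCosts A S (t + 1) = {∑ r ∈ Ico 0 (t + 1), A r} ∪ (· + S t) '' cutCosts A S t := by
  ext x
  simp only [cutCosts, Set.mem_union, Set.mem_singleton_iff, Set.mem_image, Set.mem_ofPred_eq]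
  constructor
  · rintro ⟨u, hu₀, hu, rfl⟩
    rcases hu.eq_or_lt with rfl | hu
    · exact Or.inl (cutCost_self A S _)
    · exact Or.inr ⟨_, ⟨u, hu₀, by omega, rfl⟩, (cutCost_add_one A S (by omega)).symm⟩
  · rintro (rfl | ⟨_, ⟨u, hu₀, hu, rfl⟩, rfl⟩)
    · exact sum_arrivals_mem_cutCosts A S (by omega)
    · exact ⟨u, hu₀, by omega, (cutCost_add_one A S hu).symm⟩

theorem isLeast_cutCosts_add_one {t : ℤ} {m : ℕ} (ht : 0 ≤ t) (h : IsLeast (cutCosts A S t) m) :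
    IsLeast (cutCosts A S (t + 1)) (min (∑ r ∈ Ico 0 (t + 1), A r) (m + S t)) := by
  rw [cutCosts_add_one A S ht]
  exact isLeast_singleton.union ((add_left_mono (a := S t)).map_isLeast h)

theorem qX_eq_iSup_netArrivals (n : ℤ) :
    qX A S n = ⨆ (m : ℤ) (_ : m ≤ n), ((netArrivals A S m n).toNat : ℕ∞) :=
  rfl

theorem netArrivals_add_cutCost {t u : ℤ} (hu₀ : 0 ≤ u) (hu : u ≤ t) :
    netArrivals A S u t + cutCost A S t u = ((∑ r ∈ Ico 0 t, A r : ℕ) : ℤ) := by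
  rw [netArrivals, cutCost, sum_sub_distrib, ← sum_Ico_add_sum_Ico _ hu₀ hu]
  push_cast
  ring

theorem netArrivals_le_of_neg (hA : ∀ n : ℤ, n < 0 → A n = 0) {m n : ℤ} (hm : m < 0)
    (hn : 0 ≤ n) : netArrivals A S m n ≤ netArrivals A S 0 n := by
  rw [netArrivals, netArrivals, ← sum_Ico_add_sum_Ico _ hm.le hn, add_le_iff_nonpos_left]
  refine sum_nonpos fun r hr => ?_
  simp [hA r (mem_Ico.mp hr).2]

theorem qX_eq_of_isLeast (hA : ∀ n : ℤ, n < 0 → A n = 0) {t : ℤ} {m : ℕ} (ht : 0 ≤ t)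
    (h : IsLeast (cutCosts A S t) m) : qX A S t = ((∑ r ∈ Ico 0 t, A r - m : ℕ) : ℕ∞) := by
  obtain ⟨⟨u, hu₀, hu, rfl⟩, hleast⟩ := h
  have hmax_nonneg : ∀ v, 0 ≤ v → v ≤ t → netArrivals A S v t ≤ netArrivals A S u t :=
    fun v hv₀ hv => by
      have := hleast ⟨v, hv₀, hv, rfl⟩
      linarith [netArrivals_add_cutCost A S hv₀ hv, netArrivals_add_cutCost A S hu₀ hu]
  have hmax : ∀ v ≤ t, netArrivals A S v t ≤ netArrivals A S u t := fun v hv => by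
    rcases lt_or_ge v 0 with hv₀ | hv₀
    · exact (netArrivals_le_of_neg A S hA hv₀ ht).trans (hmax_nonneg 0 le_rfl ht)
    · exact hmax_nonneg v hv₀ hv
  have hu_net : (netArrivals A S u t).toNat = ∑ r ∈ Ico 0 t, A r - cutCost A S t u := by
    have := netArrivals_add_cutCost A S hu₀ hu
    omega
  rw [qX_eq_iSup_netArrivals, ← hu_net]
  refine le_antisymm (iSup₂_le fun v hv => ?_) (le_iSup₂_of_le u hu le_rfl)
  exact_mod_cast Int.toNat_le_toNat (hmax v hv)

theorem qD_eq_of_isLeast (hA : ∀ n : ℤ, n < 0 → A n = 0) {t : ℤ} {m : ℕ} (ht : 0 ≤ t)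
    (h : IsLeast (cutCosts A S t) m) : qD A S t = min (∑ r ∈ Ico 0 t, A r - m + A t) (S t) := by
  rw [qD, qX_eq_of_isLeast A S hA ht h, ← Nat.cast_add, ← Nat.mono_cast.map_min,
    ENat.toNat_natCast]

theorem isLeast_cutCosts_sum_qD (hA : ∀ n : ℤ, n < 0 → A n = 0) {t : ℤ} (ht : 0 ≤ t) :
    IsLeast (cutCosts A S t) (∑ r ∈ Ico 0 t, qD A S r) := by
  induction t, ht using Int.leInduction with
  | base => simpa using isLeast_cutCosts_zero A S
  | succ t ht ih =>
    have hle_arrivals := ih.2 (sum_arrivals_mem_cutCosts A S ht)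
    convert isLeast_cutCosts_add_one A S ht ih using 1
    rw [sum_Ico_add_one_right _ ht, sum_Ico_add_one_right _ ht, qD_eq_of_isLeast A S hA ht ih]
    omega

end SingleQueue

/-- Single-queue departure formula with empty start: if `A(n) = 0` for `n < 0`,
the cumulative departures up to time `t` are given by the variational formula. -/
theorem single_queue_departure_formula (A S : ℤ → ℕ)
    (hA : ∀ n : ℤ, n < 0 → A n = 0) (t : ℤ) (ht : 1 ≤ t) :
    ∑ r ∈ Finset.Ico (0 : ℤ) t, qD A S r
      = sInf {x : ℕ | ∃ u : ℤ, 0 ≤ u ∧ u ≤ t ∧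
          x = ∑ r ∈ Finset.Ico (0 : ℤ) u, A r + ∑ r ∈ Finset.Ico u t, S r} :=
  (SingleQueue.isLeast_cutCosts_sum_qD A S hA (by omega)).csInf_eq.symm
end

section
/- Queue-length variational identity: if A(n)=0 for n<0, then for all t ≥ 1, X₁(t) + X₂(t) = max over u₁ ≤ u₂ ≤ t (with u₁, u₂ ≥ a suitable lower bound, equivalently the sup over all u₁ ≤ u₂ ≤ t, attained with u₁ ≥ 0) of [ ∑_{r=u₁}^{t−1} A(r) − ∑_{r=u₁}^{u₂−1} S₁(r) − ∑_{r=u₂}^{t−1} S₂(r) ]. -/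
/-!
Since nothing arrives before time `0`, a window `[m, n)` starting before `0` never carries more
net input than the one starting at `0`, so for `n ≥ 0` the queue length `X(n)` is the finite
maximum `W(n)` of the net input over the windows `[m, n)` with `0 ≤ m ≤ n`. This maximum obeys
Lindley's recursion `W(n+1) = max(W(n) + A(n) - S(n), 0)`, which turns the departures into the
conservation law `D₁(n) = W₁(n) + A(n) - W₁(n+1)`; summed over `[u₂, t)` it gives
`∑ (D₁ - S₂) + W₁(t) = W₁(u₂) + ∑ (A - S₂)`. Hence `W₁(t) + W₂(t)` is the maximum over `u₂` of
`W₁(u₂) + ∑_{[u₂,t)} (A - S₂)`, and expanding `W₁(u₂)` as a maximum over `u₁` gives the double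
maximum.
-/

open Finset

theorem Int.sum_Ico_consecutive {M : Type*} [AddCommMonoid M] (f : ℤ → M) {m n k : ℤ}
    (hmn : m ≤ n) (hnk : n ≤ k) :
    ∑ r ∈ Ico m n, f r + ∑ r ∈ Ico n k, f r = ∑ r ∈ Ico m k, f r := by
  rw [← Ico_union_Ico_eq_Ico hmn hnk, sum_union (Ico_disjoint_Ico_consecutive m n k)]

theorem Int.sum_Ico_succ_top {M : Type*} [AddCommMonoid M] (f : ℤ → M) {m n : ℤ} (h : m ≤ n) :
    ∑ r ∈ Ico m (n + 1), f r = ∑ r ∈ Ico m n, f r + f n := by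
  rw [← insert_Ico_right_eq_Ico_add_one h, sum_insert right_notMem_Ico, add_comm]

namespace TandemQueue

section MaxWindowSum

variable (f : ℤ → ℤ)

/-- The empty window `[n, n)` is always admitted, so that the value is `0` for `n < 0`. -/
noncomputable def maxWindowSum (n : ℤ) : ℤ :=
  (insert n (Icc 0 n)).sup' (insert_nonempty _ _) fun m => ∑ r ∈ Ico m n, f r

variable {f}

theorem sum_le_maxWindowSum {m n : ℤ} (h0m : 0 ≤ m) (hmn : m ≤ n) :
    ∑ r ∈ Ico m n, f r ≤ maxWindowSum f n :=
  le_sup' (fun m => ∑ r ∈ Ico m n, f r) (mem_insert_of_mem (mem_Icc.2 ⟨h0m, hmn⟩))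

theorem maxWindowSum_nonneg (n : ℤ) : 0 ≤ maxWindowSum f n :=
  le_sup'_of_le _ (mem_insert_self n (Icc 0 n)) (by simp)

theorem exists_maxWindowSum_eq (n : ℤ) :
    ∃ m, (m = n ∨ 0 ≤ m ∧ m ≤ n) ∧ maxWindowSum f n = ∑ r ∈ Ico m n, f r := by
  simpa [maxWindowSum] using
    exists_mem_eq_sup' (insert_nonempty n (Icc 0 n)) fun m => ∑ r ∈ Ico m n, f r

theorem maxWindowSum_of_neg {n : ℤ} (hn : n < 0) : maxWindowSum f n = 0 := by
  simp [maxWindowSum, Icc_eq_empty_of_lt hn]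

theorem maxWindowSum_add_one {n : ℤ} (hn : 0 ≤ n) :
    maxWindowSum f (n + 1) = max (maxWindowSum f n + f n) 0 := by
  apply le_antisymm
  · obtain ⟨m, hm, hmax⟩ := exists_maxWindowSum_eq (f := f) (n + 1)
    rw [hmax]
    rcases eq_or_lt_of_le (show m ≤ n + 1 by omega) with rfl | hlt
    · simp
    · rw [Int.sum_Ico_succ_top f (by omega : m ≤ n)]
      exact le_max_of_le_left
        (add_le_add_left (sum_le_maxWindowSum (by omega) (by omega)) _)
  · refine max_le ?_ (maxWindowSum_nonneg _)
    obtain ⟨m, hm, hmax⟩ := exists_maxWindowSum_eq (f := f) n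
    rw [hmax, ← Int.sum_Ico_succ_top f (by omega : m ≤ n)]
    exact sum_le_maxWindowSum (by omega) (by omega)

theorem sum_le_maxWindowSum_of_nonpos (hf : ∀ r < 0, f r ≤ 0) {m n : ℤ} (hmn : m ≤ n) :
    ∑ r ∈ Ico m n, f r ≤ maxWindowSum f n := by
  have hsum_neg : ∀ k ≤ 0, ∑ r ∈ Ico m k, f r ≤ 0 := fun k hk =>
    sum_nonpos fun r hr => hf r (by simp only [mem_Ico] at hr; omega)
  rcases le_or_gt 0 m with h0m | hm0
  · exact sum_le_maxWindowSum h0m hmn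
  rcases le_or_gt 0 n with h0n | hn0
  · rw [← Int.sum_Ico_consecutive f hm0.le h0n]
    linarith [hsum_neg 0 le_rfl, sum_le_maxWindowSum (f := f) le_rfl h0n]
  · linarith [hsum_neg n hn0.le, maxWindowSum_nonneg (f := f) n]

end MaxWindowSum

noncomputable def queueLength (A S : ℤ → ℕ) : ℤ → ℤ :=
  maxWindowSum fun r => (A r : ℤ) - S r

section Queue

variable {A S : ℤ → ℕ}

theorem queueLength_nonneg (n : ℤ) : 0 ≤ queueLength A S n :=
  maxWindowSum_nonneg n

theorem queueLength_add_one {n : ℤ} (hn : 0 ≤ n) :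
    queueLength A S (n + 1) = max (queueLength A S n + A n - S n) 0 := by
  rw [queueLength, maxWindowSum_add_one hn, add_sub_assoc]

theorem qX_eq_queueLength (hAS : ∀ r < 0, A r ≤ S r) (n : ℤ) :
    qX A S n = (queueLength A S n).toNat := by
  apply le_antisymm
  · refine iSup₂_le fun m hmn => Nat.cast_le.2 (Int.toNat_le_toNat ?_)
    exact sum_le_maxWindowSum_of_nonpos (fun r hr => by simpa using hAS r hr) hmn
  · obtain ⟨m, hm, hmax⟩ := exists_maxWindowSum_eq (f := fun r => (A r : ℤ) - S r) n
    refine le_iSup₂_of_le m (by omega) ?_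
    rw [queueLength, hmax]

theorem qD_eq_zero_of_neg (hA : ∀ r < 0, A r = 0) {n : ℤ} (hn : n < 0) : qD A S n = 0 := by
  rw [qD, qX_eq_queueLength (fun r hr => by simp [hA r hr]), queueLength,
    maxWindowSum_of_neg hn, hA n hn]
  simp

theorem qD_eq (hAS : ∀ r < 0, A r ≤ S r) {n : ℤ} (hn : 0 ≤ n) :
    (qD A S n : ℤ) = queueLength A S n + A n - queueLength A S (n + 1) := by
  have hmin : qD A S n = min ((queueLength A S n).toNat + A n) (S n) := by
    rw [qD, qX_eq_queueLength hAS, ← Nat.cast_add, ← Nat.mono_cast.map_min, ENat.toNat_natCast]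
  rw [hmin, queueLength_add_one hn, Nat.cast_min, Nat.cast_add,
    Int.toNat_of_nonneg (queueLength_nonneg n)]
  omega

theorem sum_qD (hAS : ∀ r < 0, A r ≤ S r) {u t : ℤ} (hu : 0 ≤ u) (hut : u ≤ t) :
    ∑ r ∈ Ico u t, (qD A S r : ℤ)
      = queueLength A S u + ∑ r ∈ Ico u t, (A r : ℤ) - queueLength A S t := by
  induction t, hut using Int.leInduction with
  | base => simp
  | succ t hut ih =>
    rw [Int.sum_Ico_succ_top _ hut, Int.sum_Ico_succ_top _ hut, ih, qD_eq hAS (hu.trans hut)]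
    ring

end Queue

section Tandem

variable {A S₁ S₂ : ℤ → ℕ} {t u₁ u₂ : ℤ}

noncomputable def tandemObjective (A S₁ S₂ : ℤ → ℕ) (t u₁ u₂ : ℤ) : ℤ :=
  ∑ r ∈ Ico u₁ t, (A r : ℤ) - ∑ r ∈ Ico u₁ u₂, (S₁ r : ℤ) - ∑ r ∈ Ico u₂ t, (S₂ r : ℤ)

theorem tandemObjective_eq (h₁₂ : u₁ ≤ u₂) (h₂t : u₂ ≤ t) :
    tandemObjective A S₁ S₂ t u₁ u₂
      = ∑ r ∈ Ico u₁ u₂, ((A r : ℤ) - S₁ r) + ∑ r ∈ Ico u₂ t, ((A r : ℤ) - S₂ r) := by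
  rw [tandemObjective, ← Int.sum_Ico_consecutive _ h₁₂ h₂t, sum_sub_distrib, sum_sub_distrib]
  ring

theorem sum_qD_sub_add_queueLength (hAS₁ : ∀ r < 0, A r ≤ S₁ r) (h0 : 0 ≤ u₂) (h₂t : u₂ ≤ t) :
    ∑ r ∈ Ico u₂ t, ((qD A S₁ r : ℤ) - S₂ r) + queueLength A S₁ t
      = queueLength A S₁ u₂ + ∑ r ∈ Ico u₂ t, ((A r : ℤ) - S₂ r) := by
  rw [sum_sub_distrib, sum_sub_distrib, sum_qD hAS₁ h0 h₂t]
  ring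

theorem tandemObjective_le (hAS₁ : ∀ r < 0, A r ≤ S₁ r) (h0 : 0 ≤ u₁) (h₁₂ : u₁ ≤ u₂)
    (h₂t : u₂ ≤ t) :
    tandemObjective A S₁ S₂ t u₁ u₂ ≤ queueLength A S₁ t + queueLength (qD A S₁) S₂ t := by
  have hqueue₁ : ∑ r ∈ Ico u₁ u₂, ((A r : ℤ) - S₁ r) ≤ queueLength A S₁ u₂ :=
    sum_le_maxWindowSum h0 h₁₂
  have hqueue₂ : ∑ r ∈ Ico u₂ t, ((qD A S₁ r : ℤ) - S₂ r) ≤ queueLength (qD A S₁) S₂ t :=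
    sum_le_maxWindowSum (h0.trans h₁₂) h₂t
  linarith [tandemObjective_eq (A := A) (S₁ := S₁) (S₂ := S₂) h₁₂ h₂t,
    sum_qD_sub_add_queueLength (S₂ := S₂) hAS₁ (h0.trans h₁₂) h₂t]

theorem exists_tandemObjective_eq (hAS₁ : ∀ r < 0, A r ≤ S₁ r) (ht : 0 ≤ t) :
    ∃ u₁ u₂, 0 ≤ u₁ ∧ u₁ ≤ u₂ ∧ u₂ ≤ t ∧
      tandemObjective A S₁ S₂ t u₁ u₂ = queueLength A S₁ t + queueLength (qD A S₁) S₂ t := by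
  obtain ⟨u₂, hu₂, hqueue₂⟩ := exists_maxWindowSum_eq (f := fun r => (qD A S₁ r : ℤ) - S₂ r) t
  obtain ⟨u₁, hu₁, hqueue₁⟩ := exists_maxWindowSum_eq (f := fun r => (A r : ℤ) - S₁ r) u₂
  have h₂ : 0 ≤ u₂ ∧ u₂ ≤ t := by omega
  have h₁ : 0 ≤ u₁ ∧ u₁ ≤ u₂ := by omega
  refine ⟨u₁, u₂, h₁.1, h₁.2, h₂.2, ?_⟩
  rw [tandemObjective_eq h₁.2 h₂.2]
  linarith [sum_qD_sub_add_queueLength (S₂ := S₂) hAS₁ h₂.1 h₂.2,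
    show queueLength A S₁ u₂ = _ from hqueue₁, show queueLength (qD A S₁) S₂ t = _ from hqueue₂]

end Tandem

end TandemQueue

open TandemQueue in
/-- Queue-length variational identity for a tandem started empty: with `A(n) = 0`
for `n < 0`, the sum of the two queue lengths at time `t` is the maximum over
`0 ≤ u₁ ≤ u₂ ≤ t` of `∑_{u₁}^{t-1} A − ∑_{u₁}^{u₂-1} S₁ − ∑_{u₂}^{t-1} S₂`. -/
theorem tandem_queue_length_variational (A S₁ S₂ : ℤ → ℕ)
    (hA : ∀ n : ℤ, n < 0 → A n = 0) (t : ℤ) (ht : 1 ≤ t) :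
    qX A S₁ t + qX (qD A S₁) S₂ t
      = ⨆ (u₁ : ℤ) (u₂ : ℤ) (_ : 0 ≤ u₁) (_ : u₁ ≤ u₂) (_ : u₂ ≤ t),
          (((∑ r ∈ Finset.Ico u₁ t, (A r : ℤ))
              - ∑ r ∈ Finset.Ico u₁ u₂, (S₁ r : ℤ)
              - ∑ r ∈ Finset.Ico u₂ t, (S₂ r : ℤ)).toNat : ℕ∞) := by
  have hAS₁ : ∀ r < 0, A r ≤ S₁ r := fun r hr => by simp [hA r hr]
  have hDS₂ : ∀ r < 0, qD A S₁ r ≤ S₂ r := fun r hr => by simp [qD_eq_zero_of_neg hA hr]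
  rw [qX_eq_queueLength hAS₁, qX_eq_queueLength hDS₂, ← Nat.cast_add,
    ← Int.toNat_add (queueLength_nonneg t) (queueLength_nonneg t)]
  apply le_antisymm
  · obtain ⟨u₁, u₂, h0, h₁₂, h₂t, heq⟩ :=
      exists_tandemObjective_eq (S₂ := S₂) hAS₁ (by omega : (0 : ℤ) ≤ t)
    refine le_iSup_of_le u₁ (le_iSup_of_le u₂ (le_iSup_of_le h0 (le_iSup_of_le h₁₂
      (le_iSup_of_le h₂t ?_))))
    rw [← heq, tandemObjective]
  · refine iSup_le fun u₁ => iSup_le fun u₂ => iSup_le fun h0 => iSup_le fun h₁₂ =>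
      iSup_le fun h₂t => Nat.cast_le.2 (Int.toNat_le_toNat ?_)
    exact tandemObjective_le hAS₁ h0 h₁₂ h₂t
end
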